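/- arXiv:2410.05188 — 3 statements merged into one kernel-verified Lean document; each statement's English description precedes it below -/
import Mathlib

section
/- For a coherent connected matrix-weighted network, the supra-Laplacian factorizes as ℒ = 𝒮ᵀ(L̄ ⊗ I)𝒮, where 𝒮 is the block diagonal matrix whose i-th diagonal block is the transformation S_{1σ(i)} of any directed path from the first block of the coherence partition to the block containing node i, and L̄ = D − W̄ is the scalar graph Laplacian built from the edge magnitudes w_{ij}. -/
open Matrix Kronecker Filter

variable {n nd m : ℕ}

/-- Supra-weight matrix: block matrix with (i,j)-block `W i j`. -/
def supra (W : Fin n → Fin n → Matrix (Fin nd) (Fin nd) ℝ) :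
    Matrix (Fin n × Fin nd) (Fin n × Fin nd) ℝ :=
  fun p q => W p.1 q.1 p.2 q.2

/-- Supra-Laplacian `ℒ = (D ⊗ I) − 𝒲`, built from edge magnitudes `w` and
edge transformations `R` (so `W i j = w i j • R i j`). -/
noncomputable def supraLap (w : Fin n → Fin n → ℝ)
    (R : Fin n → Fin n → Matrix (Fin nd) (Fin nd) ℝ) :
    Matrix (Fin n × Fin nd) (Fin n × Fin nd) ℝ :=
  (Matrix.diagonal (fun i => ∑ j, w i j)) ⊗ₖ (1 : Matrix (Fin nd) (Fin nd) ℝ)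
    - supra (fun i j => w i j • R i j)

/-- Supra-transition matrix `𝒫 = 𝒟⁻¹𝒲`. -/
noncomputable def supraP (w : Fin n → Fin n → ℝ)
    (R : Fin n → Fin n → Matrix (Fin nd) (Fin nd) ℝ) :
    Matrix (Fin n × Fin nd) (Fin n × Fin nd) ℝ :=
  fun p q => w p.1 q.1 * R p.1 q.1 p.2 q.2 / (∑ k, w p.1 k)

/-- Transformation of a directed path, given as its list of visited nodes:
the ordered product of the edge transformations. -/
def pathTransform (R : Fin n → Fin n → Matrix (Fin nd) (Fin nd) ℝ) :
    List (Fin n) → Matrix (Fin nd) (Fin nd) ℝ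
  | [] => 1
  | [_] => 1
  | i :: j :: rest => R i j * pathTransform R (j :: rest)

/-- `p` is a directed path from `i` to `j` along edges of the relation `E`. -/
def IsPathFrom (E : Fin n → Fin n → Prop) (i j : Fin n) (p : List (Fin n)) : Prop :=
  p.Chain' E ∧ p.head? = some i ∧ p.getLast? = some j

/-- Coherence: the transformation of every directed cycle is the identity. -/
def Coherent (E : Fin n → Fin n → Prop)
    (R : Fin n → Fin n → Matrix (Fin nd) (Fin nd) ℝ) : Prop :=
  ∀ i (p : List (Fin n)), IsPathFrom E i i p → pathTransform R p = 1

/-- Connectivity: any two nodes are joined by a directed path. -/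
def Connected (E : Fin n → Fin n → Prop) : Prop :=
  ∀ i j, ∃ p, IsPathFrom E i j p

/-- The block-diagonal matrix `𝒮` whose `i`-th diagonal block is `S b0 (σ i)`. -/
def blockS (σ : Fin n → Fin m) (S : Fin m → Fin m → Matrix (Fin nd) (Fin nd) ℝ)
    (b0 : Fin m) : Matrix (Fin n × Fin nd) (Fin n × Fin nd) ℝ :=
  fun p q => if p.1 = q.1 then S b0 (σ p.1) p.2 q.2 else 0

/-! Take as gauge `T i = S (σ 0) (σ i)`, the transformation of any path from node `0` to node `i`.
Coherence on the 2-cycle `i → j → i`, together with `R j i = (R i j)ᵀ`, makes every edge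
transformation orthogonal, hence every path transformation and every `T i`. Appending the edge
`i → j` to a path ending at `i` gives `T j = T i * R i j`, i.e. `R i j = (T i)ᵀ * T j` on every edge.
Conjugation by the block-diagonal `𝒮` multiplies the `(i, j)` block of `L̄ ⊗ I` by
`(T i)ᵀ * T j`, which therefore produces `δ i j • D i • 1 - w i j • R i j`. -/

section PathTransform

variable {E : Fin n → Fin n → Prop} {R : Fin n → Fin n → Matrix (Fin nd) (Fin nd) ℝ}

lemma pathTransform_append_singleton :
    ∀ {p : List (Fin n)} {x : Fin n} (j : Fin n), p.getLast? = some x →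
      pathTransform R (p ++ [j]) = pathTransform R p * R x j
  | [], _, _, h => by simp at h
  | [a], x, j, h => by
    obtain rfl : a = x := by simpa using h
    simp [pathTransform]
  | a :: b :: rest, x, j, h => by
    rw [List.getLast?_cons_cons] at h
    change R a b * pathTransform R ((b :: rest) ++ [j]) = _
    rw [pathTransform_append_singleton j h, pathTransform, mul_assoc]

lemma IsPathFrom.append_singleton {i x j : Fin n} {p : List (Fin n)}
    (hp : IsPathFrom E i x p) (hxj : E x j) : IsPathFrom E i j (p ++ [j]) := by
  obtain ⟨hchain, hhead, hlast⟩ := hp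
  have hne : p ≠ [] := by rintro rfl; simp at hhead
  refine ⟨hchain.append (List.isChain_singleton j) fun a ha b hb => ?_, ?_, List.getLast?_concat⟩
  · simp_all
  · rw [List.head?_append_of_ne_nil _ hne, hhead]

lemma Coherent.mul_eq_one (hcoh : Coherent E R) {i j : Fin n} (hij : E i j) (hji : E j i) :
    R i j * R j i = 1 := by
  have hcycle : IsPathFrom E i i [i, j, i] :=
    ⟨List.isChain_cons_cons.mpr ⟨hij, List.isChain_pair.mpr hji⟩, rfl, rfl⟩
  simpa [pathTransform] using hcoh i _ hcycle

lemma pathTransform_mul_transpose (hR : ∀ i j, E i j → R i j * (R i j)ᵀ = 1) :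
    ∀ {p : List (Fin n)}, p.IsChain E → pathTransform R p * (pathTransform R p)ᵀ = 1
  | [], _ => by simp [pathTransform]
  | [_], _ => by simp [pathTransform]
  | a :: b :: rest, hp => by
    obtain ⟨hab, hrest⟩ := List.isChain_cons_cons.mp hp
    change R a b * pathTransform R (b :: rest) * (R a b * pathTransform R (b :: rest))ᵀ = 1
    rw [transpose_mul, mul_assoc, ← mul_assoc (pathTransform R _),
      pathTransform_mul_transpose hR hrest, one_mul, hR a b hab]

variable {T : Fin n → Matrix (Fin nd) (Fin nd) ℝ} {i₀ : Fin n}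

lemma transpose_mul_self_of_pathTransform (hconn : Connected E)
    (hR : ∀ i j, E i j → R i j * (R i j)ᵀ = 1)
    (hT : ∀ i p, IsPathFrom E i₀ i p → T i = pathTransform R p) (i : Fin n) :
    (T i)ᵀ * T i = 1 := by
  obtain ⟨p, hp⟩ := hconn i₀ i
  rw [hT i p hp]
  exact mul_eq_one_comm.mp (pathTransform_mul_transpose hR hp.1)

lemma transpose_mul_of_pathTransform (hconn : Connected E)
    (hR : ∀ i j, E i j → R i j * (R i j)ᵀ = 1)
    (hT : ∀ i p, IsPathFrom E i₀ i p → T i = pathTransform R p) {i j : Fin n} (hij : E i j) :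
    (T i)ᵀ * T j = R i j := by
  obtain ⟨p, hp⟩ := hconn i₀ i
  rw [hT j _ (hp.append_singleton hij), pathTransform_append_singleton j hp.2.2, ← hT i p hp,
    ← mul_assoc, transpose_mul_self_of_pathTransform hconn hR hT i, one_mul]

end PathTransform

lemma kronecker_one_eq_supra (A : Matrix (Fin n) (Fin n) ℝ) :
    A ⊗ₖ (1 : Matrix (Fin nd) (Fin nd) ℝ) = supra fun i j => A i j • 1 := rfl

lemma supra_sub (W V : Fin n → Fin n → Matrix (Fin nd) (Fin nd) ℝ) :
    supra W - supra V = supra (W - V) := rfl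

lemma transpose_blockS_mul_supra_mul_blockS (σ : Fin n → Fin m)
    (S : Fin m → Fin m → Matrix (Fin nd) (Fin nd) ℝ) (b₀ : Fin m)
    (W : Fin n → Fin n → Matrix (Fin nd) (Fin nd) ℝ) :
    (blockS σ S b₀)ᵀ * supra W * blockS σ S b₀ =
      supra fun i j => (S b₀ (σ i))ᵀ * W i j * S b₀ (σ j) := by
  ext ⟨i, a⟩ ⟨j, b⟩
  simp [supra, blockS, mul_apply, Fintype.sum_prod_type]

theorem stmt4_general [NeZero n] (w : Fin n → Fin n → ℝ)
    (R : Fin n → Fin n → Matrix (Fin nd) (Fin nd) ℝ)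
    (σ : Fin n → Fin m) (S : Fin m → Fin m → Matrix (Fin nd) (Fin nd) ℝ)
    (hw_symm : ∀ i j, w i j = w j i)
    (hrec : ∀ i j, R i j = (R j i)ᵀ)
    (hcoh : Coherent (fun i j => w i j ≠ 0) R)
    (hconn : Connected (fun i j => w i j ≠ 0))
    (hS : ∀ i j q, IsPathFrom (fun i j => w i j ≠ 0) i j q →
      S (σ i) (σ j) = pathTransform R q) :
    supraLap w R =
      (blockS σ S (σ 0))ᵀ *
        ((Matrix.diagonal (fun i => ∑ j, w i j) - Matrix.of w)
          ⊗ₖ (1 : Matrix (Fin nd) (Fin nd) ℝ)) *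
        blockS σ S (σ 0) := by
  set T : Fin n → Matrix (Fin nd) (Fin nd) ℝ := fun i => S (σ 0) (σ i)
  have hR : ∀ i j, w i j ≠ 0 → R i j * (R i j)ᵀ = 1 := fun i j hij => by
    rw [← hrec j i]
    exact hcoh.mul_eq_one hij (hw_symm i j ▸ hij)
  have hdiag : ∀ i j, diagonal (fun i => ∑ j, w i j) i j • (1 : Matrix (Fin nd) (Fin nd) ℝ) =
      diagonal (fun i => ∑ j, w i j) i j • ((T i)ᵀ * T j) := fun i j => by
    rcases eq_or_ne i j with rfl | hij
    · rw [transpose_mul_self_of_pathTransform hconn hR (hS 0) i]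
    · simp [hij]
  have hoff : ∀ i j, w i j • R i j = w i j • ((T i)ᵀ * T j) := fun i j => by
    rcases eq_or_ne (w i j) 0 with hij | hij
    · simp [hij]
    · rw [transpose_mul_of_pathTransform hconn hR (hS 0) hij]
  rw [supraLap, kronecker_one_eq_supra, kronecker_one_eq_supra, supra_sub,
    transpose_blockS_mul_supra_mul_blockS]
  congr 1
  funext i j
  rw [Pi.sub_apply, Pi.sub_apply, hdiag, hoff, Matrix.sub_apply, of_apply, Matrix.mul_smul,
    mul_one, Matrix.smul_mul, sub_smul]

/-- for a coherent connected network, the supra-Laplacian factorizes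
as `ℒ = 𝒮ᵀ(L̄ ⊗ I)𝒮`, with `𝒮` block diagonal (blocks `S_{1σ(i)}`) and
`L̄ = D − W̄` the scalar Laplacian of the magnitudes. -/
theorem stmt4 [NeZero n] (w : Fin n → Fin n → ℝ)
    (R : Fin n → Fin n → Matrix (Fin nd) (Fin nd) ℝ)
    (σ : Fin n → Fin m) (S : Fin m → Fin m → Matrix (Fin nd) (Fin nd) ℝ)
    (hw_symm : ∀ i j, w i j = w j i) (hw_nonneg : ∀ i j, 0 ≤ w i j)
    (hloop : ∀ i, w i i = 0)
    (hrec : ∀ i j, R i j = (R j i)ᵀ)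
    (hcoh : Coherent (fun i j => w i j ≠ 0) R)
    (hconn : Connected (fun i j => w i j ≠ 0))
    (hS : ∀ i j q, IsPathFrom (fun i j => w i j ≠ 0) i j q →
      S (σ i) (σ j) = pathTransform R q) :
    supraLap w R =
      (blockS σ S (σ 0))ᵀ *
        ((Matrix.diagonal (fun i => ∑ j, w i j) - Matrix.of w)
          ⊗ₖ (1 : Matrix (Fin nd) (Fin nd) ℝ)) *
        blockS σ S (σ 0) :=
  stmt4_general w R σ S hw_symm hrec hcoh hconn hS
end

section
/- The supra-transition matrix 𝒫 = 𝒟⁻¹𝒲 of a matrix-weighted network has spectral radius at most 1. -/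
/-! Cut a vector of `ℂ^(n·nd)` into blocks `vᵢ ∈ ℂ^nd`. Then `(𝒫v)ᵢ = ∑ⱼ (wᵢⱼ / dᵢ) Rᵢⱼ vⱼ` is a
convex combination of images of the `vⱼ` under Euclidean contractions, so `𝒫` does not increase
`maxᵢ ‖vᵢ‖`; applied to an eigenvector for `μ`, this gives `|μ| ≤ 1`. -/

open Matrix Kronecker Filter

variable {n nd m : ℕ}

section ComplexifiedContraction

variable {ι κ : Type*} [Fintype κ]

lemma re_map_ofReal_mulVec (M : Matrix ι κ ℝ) (v : κ → ℂ) (a : ι) :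
    ((M.map (algebraMap ℝ ℂ) *ᵥ v) a).re = (M *ᵥ fun b => (v b).re) a := by
  simp [mulVec, dotProduct, Complex.re_sum]

lemma im_map_ofReal_mulVec (M : Matrix ι κ ℝ) (v : κ → ℂ) (a : ι) :
    ((M.map (algebraMap ℝ ℂ) *ᵥ v) a).im = (M *ᵥ fun b => (v b).im) a := by
  simp [mulVec, dotProduct, Complex.im_sum]

lemma norm_toLp_map_ofReal_mulVec_le [Fintype ι] (M : Matrix ι κ ℝ)
    (hM : ∀ x : κ → ℝ, ∑ a, (M *ᵥ x) a ^ 2 ≤ ∑ b, x b ^ 2) (v : EuclideanSpace ℂ κ) :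
    ‖(WithLp.toLp 2 (M.map (algebraMap ℝ ℂ) *ᵥ v.ofLp) : EuclideanSpace ℂ ι)‖ ≤ ‖v‖ := by
  rw [EuclideanSpace.norm_eq, EuclideanSpace.norm_eq]
  refine Real.sqrt_le_sqrt ?_
  simp only [← Complex.normSq_eq_norm_sq, Complex.normSq_apply, ← sq,
    re_map_ofReal_mulVec, im_map_ofReal_mulVec, Finset.sum_add_distrib]
  exact add_le_add (hM _) (hM _)

end ComplexifiedContraction

def blockVec (v : Fin n × Fin nd → ℂ) : Fin n → EuclideanSpace ℂ (Fin nd) :=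
  fun i => WithLp.toLp 2 fun a => v (i, a)

lemma blockVec_smul (c : ℂ) (v : Fin n × Fin nd → ℂ) : blockVec (c • v) = c • blockVec v :=
  rfl

lemma blockVec_ne_zero {v : Fin n × Fin nd → ℂ} (hv : v ≠ 0) : blockVec v ≠ 0 := by
  contrapose! hv
  ext p
  simpa [blockVec] using congrArg (fun f => (f p.1).ofLp p.2) hv

lemma blockVec_supraP_mulVec (w : Fin n → Fin n → ℝ)
    (R : Fin n → Fin n → Matrix (Fin nd) (Fin nd) ℝ) (v : Fin n × Fin nd → ℂ) (i : Fin n) :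
    blockVec ((supraP w R).map (algebraMap ℝ ℂ) *ᵥ v) i =
      ∑ j, ((w i j / ∑ k, w i k : ℝ) : ℂ) •
        WithLp.toLp 2 ((R i j).map (algebraMap ℝ ℂ) *ᵥ (blockVec v j).ofLp) := by
  ext a
  simp only [blockVec, mulVec, dotProduct, Complex.coe_algebraMap, map_apply, supraP, Complex.ofReal_div,
    Complex.ofReal_mul, Complex.ofReal_sum, Fintype.sum_prod_type, WithLp.ofLp_sum, WithLp.ofLp_smul, Finset.sum_apply,
    Pi.smul_apply, smul_eq_mul, Finset.mul_sum]
  exact Finset.sum_congr rfl fun j _ => Finset.sum_congr rfl fun b _ => by ring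

lemma norm_blockVec_supraP_mulVec_le (w : Fin n → Fin n → ℝ)
    (R : Fin n → Fin n → Matrix (Fin nd) (Fin nd) ℝ) (hw_nonneg : ∀ i j, 0 ≤ w i j)
    (hRnorm : ∀ i j (x : Fin nd → ℝ), ∑ a, ((R i j).mulVec x a) ^ 2 ≤ ∑ a, (x a) ^ 2)
    (hd : ∀ i, 0 < ∑ j, w i j) (v : Fin n × Fin nd → ℂ) :
    ‖blockVec ((supraP w R).map (algebraMap ℝ ℂ) *ᵥ v)‖ ≤ ‖blockVec v‖ := by
  refine (pi_norm_le_iff_of_nonneg (norm_nonneg _)).2 fun i => ?_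
  have hweight : ∀ j, 0 ≤ w i j / ∑ k, w i k := fun j => div_nonneg (hw_nonneg i j) (hd i).le
  calc ‖blockVec ((supraP w R).map (algebraMap ℝ ℂ) *ᵥ v) i‖
      ≤ ∑ j, w i j / (∑ k, w i k) * ‖blockVec v j‖ := by
        rw [blockVec_supraP_mulVec]
        refine (norm_sum_le _ _).trans (Finset.sum_le_sum fun j _ => ?_)
        rw [norm_smul, Complex.norm_real, Real.norm_of_nonneg (hweight j)]
        exact mul_le_mul_of_nonneg_left
          (norm_toLp_map_ofReal_mulVec_le _ (hRnorm i j) _) (hweight j)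
    _ ≤ ∑ j, w i j / (∑ k, w i k) * ‖blockVec v‖ :=
        Finset.sum_le_sum fun j _ => mul_le_mul_of_nonneg_left (norm_le_pi_norm _ j) (hweight j)
    _ = ‖blockVec v‖ := by
        rw [← Finset.sum_mul, ← Finset.sum_div, div_self (hd i).ne', one_mul]

theorem stmt8_general (w : Fin n → Fin n → ℝ)
    (R : Fin n → Fin n → Matrix (Fin nd) (Fin nd) ℝ)
    (hw_nonneg : ∀ i j, 0 ≤ w i j)
    (hRnorm : ∀ i j (x : Fin nd → ℝ),
      ∑ a, ((R i j).mulVec x a) ^ 2 ≤ ∑ a, (x a) ^ 2)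
    (hd : ∀ i, 0 < ∑ j, w i j) :
    ∀ μ ∈ spectrum ℂ ((supraP w R).map (algebraMap ℝ ℂ)), ‖μ‖ ≤ 1 := by
  intro μ hμ
  rw [← Matrix.spectrum_toLin', ← Module.End.hasEigenvalue_iff_mem_spectrum] at hμ
  obtain ⟨v, hv⟩ := hμ.exists_hasEigenvector
  have heig : (supraP w R).map (algebraMap ℝ ℂ) *ᵥ v = μ • v := by
    simpa using hv.apply_eq_smul
  have hpos : 0 < ‖blockVec v‖ := norm_pos_iff.2 (blockVec_ne_zero hv.2)
  have hle := norm_blockVec_supraP_mulVec_le w R hw_nonneg hRnorm hd v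
  rw [heig, blockVec_smul, norm_smul] at hle
  exact le_of_mul_le_mul_right (by rwa [one_mul]) hpos

/-- the supra-transition matrix `𝒫 = 𝒟⁻¹𝒲` has spectral radius
at most `1`: every (complex) eigenvalue has modulus at most `1`. -/
theorem stmt8 (w : Fin n → Fin n → ℝ)
    (R : Fin n → Fin n → Matrix (Fin nd) (Fin nd) ℝ)
    (hw_symm : ∀ i j, w i j = w j i) (hw_nonneg : ∀ i j, 0 ≤ w i j)
    (hrec : ∀ i j, R i j = (R j i)ᵀ)
    (hRnorm : ∀ i j (x : Fin nd → ℝ),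
      ∑ a, ((R i j).mulVec x a) ^ 2 ≤ ∑ a, (x a) ^ 2)
    (hd : ∀ i, 0 < ∑ j, w i j) :
    ∀ μ ∈ spectrum ℂ ((supraP w R).map (algebraMap ℝ ℂ)), ‖μ‖ ≤ 1 :=
  stmt8_general w R hw_nonneg hRnorm hd
end

section
/- If G is a connected coherent matrix-weighted network, the consensus dynamics ẏ = −ℒy converges as t → ∞ to the steady state y_j* = S_{σ(j)1} ȳ(0)/n for every node j, where ȳ(0) = Σ_{i=1}^n S_{1σ(i)} y_i(0). -/
/-!
Coherence applied to the 2-cycles `i → j → i` makes every edge transformation orthogonal, so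
`2 yᵀℒy = Σ_{i,j} w_ij ‖y_i − R_ij y_j‖²`: `ℒ` is positive semidefinite and its kernel consists
of the `y` with `y_i = R_ij y_j` along every edge. By connectivity such a `y` is determined by its
block at node `0` through `y_i = S_{σ(i)σ(0)} y_0`, so `ker ℒ` is the range of `𝒯 = 𝒮ᵀ(𝟏 ⊗ I)`.
The blocks of `𝒯` are orthogonal, so `𝒯ᵀ𝒯 = n I` and `𝒯𝒯ᵀ/n` is the orthogonal projection onto
`ker ℒ`. Diagonalising `ℒ`, `exp(−tℒ)` tends to that projection, which maps `y(0)` to the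
steady state.
-/
open Matrix Kronecker Filter

variable {n nd m : ℕ}

open Topology

lemma Matrix.mul_diagonal_mul_star_apply {ι : Type*} [Fintype ι] [DecidableEq ι]
    (U : Matrix ι ι ℝ) (d : ι → ℝ) (p q : ι) :
    (U * diagonal d * star U) p q = ∑ k, U p k * d k * U q k := by
  rw [mul_apply]
  simp only [mul_diagonal, star_apply, star_trivial]

namespace Matrix.IsHermitian

variable {ι : Type*} [Fintype ι] [DecidableEq ι] {A : Matrix ι ι ℝ} (hA : A.IsHermitian)

lemma star_eigenvectorUnitary_mul_self :
    star (hA.eigenvectorUnitary : Matrix ι ι ℝ) * hA.eigenvectorUnitary = 1 :=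
  mem_unitaryGroup_iff'.mp hA.eigenvectorUnitary.2

lemma eigenvectorUnitary_mul_star_self :
    (hA.eigenvectorUnitary : Matrix ι ι ℝ) * star (hA.eigenvectorUnitary : Matrix ι ι ℝ) = 1 :=
  mem_unitaryGroup_iff.mp hA.eigenvectorUnitary.2

lemma eq_conj_diagonal_eigenvalues :
    A = (hA.eigenvectorUnitary : Matrix ι ι ℝ) * diagonal hA.eigenvalues
      * star (hA.eigenvectorUnitary : Matrix ι ι ℝ) :=
  hA.spectral_theorem.trans (by rw [Unitary.conjStarAlgAut_apply]; rfl)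

lemma exp_neg_smul_eq (t : ℝ) :
    NormedSpace.exp ((-t) • A) = (hA.eigenvectorUnitary : Matrix ι ι ℝ)
      * diagonal (fun k => Real.exp (-t * hA.eigenvalues k))
      * star (hA.eigenvectorUnitary : Matrix ι ι ℝ) := by
  set U : Matrix ι ι ℝ := (hA.eigenvectorUnitary : Matrix ι ι ℝ)
  have hUinv : U⁻¹ = star U := inv_eq_left_inv hA.star_eigenvectorUnitary_mul_self
  have hU : IsUnit U :=
    ⟨⟨U, star U, hA.eigenvectorUnitary_mul_star_self, hA.star_eigenvectorUnitary_mul_self⟩, rfl⟩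
  have hconj : (-t) • A = U * diagonal (fun k => -t * hA.eigenvalues k) * U⁻¹ := by
    conv_lhs => rw [hA.eq_conj_diagonal_eigenvalues]
    rw [hUinv, ← smul_mul_assoc, ← mul_smul_comm, ← diagonal_smul]
    rfl
  rw [hconj, exp_conj U _ hU, exp_diagonal, hUinv]
  simp only [Pi.exp_def, ← Real.exp_eq_exp_ℝ]

noncomputable def kernelProj : Matrix ι ι ℝ :=
  (hA.eigenvectorUnitary : Matrix ι ι ℝ) * diagonal (fun k => if hA.eigenvalues k = 0 then 1 else 0)
    * star (hA.eigenvectorUnitary : Matrix ι ι ℝ)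

lemma kernelProj_transpose : hA.kernelProjᵀ = hA.kernelProj := by
  ext p q
  simp only [transpose_apply, kernelProj, mul_diagonal_mul_star_apply]
  exact Finset.sum_congr rfl fun k _ => by ring

lemma mul_kernelProj : A * hA.kernelProj = 0 := by
  have hdiag : diagonal hA.eigenvalues
      * diagonal (fun k => if hA.eigenvalues k = 0 then (1 : ℝ) else 0) = 0 := by
    rw [diagonal_mul_diagonal, ← diagonal_zero]
    congr 1
    ext k
    split_ifs with hk <;> simp [hk]
  calc A * hA.kernelProj
      = (hA.eigenvectorUnitary : Matrix ι ι ℝ) * (diagonal hA.eigenvalues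
          * (star (hA.eigenvectorUnitary : Matrix ι ι ℝ) * hA.eigenvectorUnitary)
          * diagonal (fun k => if hA.eigenvalues k = 0 then (1 : ℝ) else 0))
          * star (hA.eigenvectorUnitary : Matrix ι ι ℝ) := by
        rw [kernelProj]; conv_lhs => enter [1]; rw [hA.eq_conj_diagonal_eigenvalues]
        simp only [Matrix.mul_assoc]
    _ = 0 := by
        rw [hA.star_eigenvectorUnitary_mul_self, Matrix.mul_one, hdiag, Matrix.mul_zero,
          Matrix.zero_mul]

lemma kernelProj_mul_of_mul_eq_zero {M : Matrix ι ι ℝ} (hM : A * M = 0) :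
    hA.kernelProj * M = M := by
  set U : Matrix ι ι ℝ := (hA.eigenvectorUnitary : Matrix ι ι ℝ)
  have hUM : diagonal hA.eigenvalues * (star U * M) = 0 := by
    calc diagonal hA.eigenvalues * (star U * M)
        = star U * (U * diagonal hA.eigenvalues * star U) * M := by
          simp only [← Matrix.mul_assoc, hA.star_eigenvectorUnitary_mul_self, Matrix.one_mul, U]
      _ = 0 := by rw [← hA.eq_conj_diagonal_eigenvalues, Matrix.mul_assoc, hM, Matrix.mul_zero]
  have hfix : diagonal (fun k => if hA.eigenvalues k = 0 then (1 : ℝ) else 0) * (star U * M)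
      = star U * M := by
    ext k j
    have hkj := congrFun (congrFun hUM k) j
    rw [diagonal_mul] at hkj ⊢
    split_ifs with hk
    · exact one_mul _
    · exact (zero_mul _).trans ((mul_eq_zero.mp hkj).resolve_left hk).symm
  calc hA.kernelProj * M
      = U * (diagonal (fun k => if hA.eigenvalues k = 0 then (1 : ℝ) else 0) * (star U * M)) := by
        simp only [kernelProj, Matrix.mul_assoc, U]
    _ = M := by
        rw [hfix, ← Matrix.mul_assoc, hA.eigenvectorUnitary_mul_star_self, Matrix.one_mul]

lemma eq_kernelProj {Q : Matrix ι ι ℝ} (hQ : Qᵀ = Q) (hAQ : A * Q = 0)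
    (hfix : ∀ v, A *ᵥ v = 0 → Q *ᵥ v = v) : Q = hA.kernelProj := by
  have hQP : Q * hA.kernelProj = hA.kernelProj := by
    ext p q
    have hcol : A *ᵥ (fun r => hA.kernelProj r q) = 0 := funext fun r =>
      congrFun (congrFun hA.mul_kernelProj r) q
    exact congrFun (hfix _ hcol) p
  calc Q = (hA.kernelProj * Q)ᵀ := by rw [hA.kernelProj_mul_of_mul_eq_zero hAQ, hQ]
    _ = hA.kernelProj := by rw [transpose_mul, hQ, hA.kernelProj_transpose, hQP]

end Matrix.IsHermitian

lemma Matrix.PosSemidef.tendsto_exp_neg_smul {ι : Type*} [Fintype ι] [DecidableEq ι]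
    {A : Matrix ι ι ℝ} (hA : A.PosSemidef) :
    Tendsto (fun t : ℝ => NormedSpace.exp ((-t) • A)) atTop (𝓝 hA.isHermitian.kernelProj) := by
  simp only [hA.isHermitian.exp_neg_smul_eq, IsHermitian.kernelProj]
  refine tendsto_pi_nhds.mpr fun p => tendsto_pi_nhds.mpr fun q => ?_
  simp only [mul_diagonal_mul_star_apply]
  refine tendsto_finsetSum _ fun k _ => (Tendsto.const_mul _ ?_).mul_const _
  split_ifs with hk
  · simp [hk]
  · have hpos : 0 < hA.isHermitian.eigenvalues k := (hA.eigenvalues_nonneg k).lt_of_ne' hk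
    have hlin : Tendsto (fun t : ℝ => -t * hA.isHermitian.eigenvalues k) atTop atBot :=
      tendsto_neg_atTop_atBot.atBot_mul_const hpos
    exact Real.tendsto_exp_atBot.comp hlin

section PathTransform

variable {R : Fin n → Fin n → Matrix (Fin nd) (Fin nd) ℝ} {E : Fin n → Fin n → Prop}

lemma pathTransform_cons_cons (i j : Fin n) (p : List (Fin n)) :
    pathTransform R (i :: j :: p) = R i j * pathTransform R (j :: p) := rfl

lemma pathTransform_append_pair (p : List (Fin n)) (i j : Fin n) :
    pathTransform R (p ++ [i, j]) = pathTransform R (p ++ [i]) * R i j := by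
  induction p with
  | nil => simp [pathTransform]
  | cons a p ih =>
    cases p with
    | nil => simp [pathTransform]
    | cons b p =>
      show R a b * pathTransform R (b :: p ++ [i, j])
        = R a b * pathTransform R (b :: p ++ [i]) * R i j
      rw [ih, Matrix.mul_assoc]

lemma pathTransform_reverse (hrec : ∀ i j, R i j = (R j i)ᵀ) (p : List (Fin n)) :
    pathTransform R p.reverse = (pathTransform R p)ᵀ := by
  induction p with
  | nil => simp [pathTransform]
  | cons i p ih =>
    cases p with
    | nil => simp [pathTransform]
    | cons j p =>
      rw [List.reverse_cons, List.reverse_cons, List.append_assoc, List.singleton_append,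
        pathTransform_append_pair, ← List.reverse_cons, ih, pathTransform_cons_cons,
        transpose_mul, hrec j i]

lemma pathTransform_mul_transpose_self (horth : ∀ i j, E i j → R i j * (R i j)ᵀ = 1)
    {p : List (Fin n)} (hp : p.IsChain E) : pathTransform R p * (pathTransform R p)ᵀ = 1 := by
  induction p with
  | nil => simp [pathTransform]
  | cons i p ih =>
    cases p with
    | nil => simp [pathTransform]
    | cons j p =>
      rw [List.isChain_cons_cons] at hp
      rw [pathTransform_cons_cons, transpose_mul, Matrix.mul_assoc, ← Matrix.mul_assoc _ _ (R i j)ᵀ,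
        ih hp.2, Matrix.one_mul, horth i j hp.1]

lemma Coherent.mul_transpose_self (hcoh : Coherent E R) (hE : ∀ i j, E i j → E j i)
    (hrec : ∀ i j, R i j = (R j i)ᵀ) {i j : Fin n} (hij : E i j) : R i j * (R i j)ᵀ = 1 := by
  have hcycle : IsPathFrom E i i [i, j, i] :=
    ⟨List.isChain_cons_cons.mpr ⟨hij, List.isChain_pair.mpr (hE i j hij)⟩, rfl, rfl⟩
  simpa [pathTransform, ← hrec] using hcoh i _ hcycle

lemma IsPathFrom.reverse (hE : ∀ i j, E i j → E j i) {i j : Fin n} {p : List (Fin n)}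
    (hp : IsPathFrom E i j p) : IsPathFrom E j i p.reverse :=
  ⟨List.isChain_reverse.mpr (hp.1.imp fun a b h => hE a b h),
    by rw [List.head?_reverse]; exact hp.2.2, by rw [List.getLast?_reverse]; exact hp.2.1⟩

lemma IsPathFrom.cons {i j k : Fin n} {p : List (Fin n)} (hij : E i j)
    (hp : IsPathFrom E j k p) :
    IsPathFrom E i k (i :: p) ∧ pathTransform R (i :: p) = R i j * pathTransform R p := by
  obtain ⟨hc, hh, hl⟩ := hp
  cases p with
  | nil => simp at hh
  | cons j' p =>
    obtain rfl : j' = j := by simpa using hh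
    exact ⟨⟨List.isChain_cons_cons.mpr ⟨hij, hc⟩, rfl, by rwa [List.getLast?_cons_cons]⟩, rfl⟩

lemma IsPathFrom.eq_pathTransform_mulVec {x : Fin n → Fin nd → ℝ}
    (hedge : ∀ i j, E i j → x i = R i j *ᵥ x j) :
    ∀ {i j : Fin n} {p : List (Fin n)}, IsPathFrom E i j p → x i = pathTransform R p *ᵥ x j
  | _, _, [], hp => by simp [IsPathFrom] at hp
  | i, j, [k], ⟨_, hh, hl⟩ => by
    obtain rfl : k = i := by simpa using hh
    obtain rfl : k = j := by simpa using hl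
    simp [pathTransform]
  | i, j, k :: l :: p, ⟨hc, hh, hl⟩ => by
    obtain rfl : k = i := by simpa using hh
    replace hc : (k :: l :: p).IsChain E := hc
    rw [List.isChain_cons_cons] at hc
    rw [hedge k l hc.1, IsPathFrom.eq_pathTransform_mulVec hedge
      ⟨hc.2, rfl, by rwa [List.getLast?_cons_cons] at hl⟩, mulVec_mulVec]
    rfl

end PathTransform

section SupraLaplacian

variable {w : Fin n → Fin n → ℝ} {R : Fin n → Fin n → Matrix (Fin nd) (Fin nd) ℝ}

lemma supraLap_apply (p q : Fin n × Fin nd) :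
    supraLap w R p q = (if p = q then ∑ k, w p.1 k else 0) - w p.1 q.1 * R p.1 q.1 p.2 q.2 := by
  obtain ⟨i, a⟩ := p
  obtain ⟨j, b⟩ := q
  by_cases hij : i = j <;> by_cases hab : a = b <;> simp [supraLap, supra, hij, hab]

lemma curry_supraLap_mulVec (v : Fin n × Fin nd → ℝ) (i : Fin n) :
    Function.curry (supraLap w R *ᵥ v) i
      = ∑ j, w i j • (Function.curry v i - R i j *ᵥ Function.curry v j) := by
  ext a
  simp only [mulVec, dotProduct, supraLap_apply, sub_mul, ite_mul, zero_mul, Finset.sum_sub_distrib,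
    Finset.sum_ite_eq, Finset.mem_univ, if_true, Fintype.sum_prod_type, Function.curry_apply,
    Finset.sum_apply, Pi.smul_apply, Pi.sub_apply, smul_eq_mul, mul_sub, Finset.mul_sum,
    Finset.sum_mul, mul_assoc]

lemma supraLap_transpose (hw : ∀ i j, w i j = w j i) (hrec : ∀ i j, R i j = (R j i)ᵀ) :
    (supraLap w R)ᵀ = supraLap w R := by
  ext p q
  rw [transpose_apply, supraLap_apply, supraLap_apply, hw, hrec, transpose_apply]
  by_cases h : p = q
  · subst h; rfl
  · rw [if_neg (Ne.symm h), if_neg h]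

lemma dotProduct_eq_sum_curry (u v : Fin n × Fin nd → ℝ) :
    u ⬝ᵥ v = ∑ i, Function.curry u i ⬝ᵥ Function.curry v i := by
  simp only [dotProduct, Fintype.sum_prod_type, Function.curry_apply]

lemma mulVec_dotProduct_mulVec_self {M : Matrix (Fin nd) (Fin nd) ℝ} (hM : Mᵀ * M = 1)
    (x : Fin nd → ℝ) : (M *ᵥ x) ⬝ᵥ (M *ᵥ x) = x ⬝ᵥ x := by
  rw [dotProduct_mulVec, ← mulVec_transpose, mulVec_mulVec, hM, one_mulVec, dotProduct_comm]

lemma two_mul_dotProduct_supraLap_mulVec (hw : ∀ i j, w i j = w j i)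
    (horth : ∀ i j, w i j ≠ 0 → R i j * (R i j)ᵀ = 1) (v : Fin n × Fin nd → ℝ) :
    2 * (v ⬝ᵥ (supraLap w R *ᵥ v)) = ∑ i, ∑ j, w i j *
      ((Function.curry v i - R i j *ᵥ Function.curry v j)
        ⬝ᵥ (Function.curry v i - R i j *ᵥ Function.curry v j)) := by
  set x := Function.curry v
  have hedge : ∀ i j, 2 * (w i j * (x i ⬝ᵥ (x i - R i j *ᵥ x j)))
      = w i j * ((x i - R i j *ᵥ x j) ⬝ᵥ (x i - R i j *ᵥ x j))
        + (w i j * (x i ⬝ᵥ x i) - w j i * (x j ⬝ᵥ x j)) := by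
    intro i j
    rw [← hw i j]
    by_cases hij : w i j = 0
    · simp [hij]
    · have hR := mulVec_dotProduct_mulVec_self (mul_eq_one_comm.mp (horth i j hij)) (x j)
      simp only [dotProduct_sub, sub_dotProduct, hR, dotProduct_comm (R i j *ᵥ x j) (x i)]
      ring
  have hcancel : ∑ i, ∑ j, (w i j * (x i ⬝ᵥ x i) - w j i * (x j ⬝ᵥ x j)) = 0 := by
    simp only [Finset.sum_sub_distrib]
    rw [Finset.sum_comm (f := fun i j => w j i * (x j ⬝ᵥ x j)), sub_self]
  calc 2 * (v ⬝ᵥ (supraLap w R *ᵥ v))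
      = ∑ i, ∑ j, 2 * (w i j * (x i ⬝ᵥ (x i - R i j *ᵥ x j))) := by
        simp only [dotProduct_eq_sum_curry v, curry_supraLap_mulVec, dotProduct_sum,
          dotProduct_smul, smul_eq_mul, Finset.mul_sum, x]
    _ = _ := by
        simp only [hedge, Finset.sum_add_distrib, hcancel, add_zero]

lemma supraLap_posSemidef (hw : ∀ i j, w i j = w j i) (hw_nonneg : ∀ i j, 0 ≤ w i j)
    (hrec : ∀ i j, R i j = (R j i)ᵀ) (horth : ∀ i j, w i j ≠ 0 → R i j * (R i j)ᵀ = 1) :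
    (supraLap w R).PosSemidef := by
  refine posSemidef_iff_dotProduct_mulVec.mpr ⟨supraLap_transpose hw hrec, fun v => ?_⟩
  have h := two_mul_dotProduct_supraLap_mulVec hw horth v
  have : 0 ≤ 2 * (v ⬝ᵥ (supraLap w R *ᵥ v)) := h ▸ Finset.sum_nonneg fun i _ =>
    Finset.sum_nonneg fun j _ => mul_nonneg (hw_nonneg i j) (dotProduct_self_star_nonneg _)
  simpa using this

lemma curry_eq_mulVec_of_supraLap_mulVec_eq_zero (hw : ∀ i j, w i j = w j i)
    (hw_nonneg : ∀ i j, 0 ≤ w i j) (horth : ∀ i j, w i j ≠ 0 → R i j * (R i j)ᵀ = 1)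
    {v : Fin n × Fin nd → ℝ} (hv : supraLap w R *ᵥ v = 0) {i j : Fin n} (hij : w i j ≠ 0) :
    Function.curry v i = R i j *ᵥ Function.curry v j := by
  have hterm : ∀ i j, 0 ≤ w i j * ((Function.curry v i - R i j *ᵥ Function.curry v j)
      ⬝ᵥ (Function.curry v i - R i j *ᵥ Function.curry v j)) := fun i j =>
    mul_nonneg (hw_nonneg i j) (dotProduct_self_star_nonneg _)
  have hsum := two_mul_dotProduct_supraLap_mulVec hw horth v
  rw [hv, dotProduct_zero, mul_zero, eq_comm,
    Finset.sum_eq_zero_iff_of_nonneg fun i _ => Finset.sum_nonneg fun j _ => hterm i j] at hsum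
  have hzero := (Finset.sum_eq_zero_iff_of_nonneg fun j _ => hterm i j).mp
    (hsum i (Finset.mem_univ i)) j (Finset.mem_univ j)
  rw [mul_eq_zero, dotProduct_self_eq_zero, sub_eq_zero] at hzero
  exact hzero.resolve_left hij

end SupraLaplacian

section Consensus

variable [NeZero n] {R : Fin n → Fin n → Matrix (Fin nd) (Fin nd) ℝ} {E : Fin n → Fin n → Prop}
  {σ : Fin n → Fin m} {S : Fin m → Fin m → Matrix (Fin nd) (Fin nd) ℝ}

lemma S_eq_mul_S_of_edge (hconn : Connected E)
    (hS : ∀ i j q, IsPathFrom E i j q → S (σ i) (σ j) = pathTransform R q)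
    {i j : Fin n} (hij : E i j) : S (σ i) (σ 0) = R i j * S (σ j) (σ 0) := by
  obtain ⟨p, hp⟩ := hconn j 0
  obtain ⟨hp', hcons⟩ := hp.cons (R := R) hij
  rw [hS i 0 _ hp', hcons, hS j 0 p hp]

lemma S_mul_transpose_self (horth : ∀ i j, E i j → R i j * (R i j)ᵀ = 1) (hconn : Connected E)
    (hS : ∀ i j q, IsPathFrom E i j q → S (σ i) (σ j) = pathTransform R q) (i : Fin n) :
    S (σ i) (σ 0) * (S (σ i) (σ 0))ᵀ = 1 := by
  obtain ⟨p, hp⟩ := hconn i 0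
  rw [hS i 0 p hp]
  exact pathTransform_mul_transpose_self horth hp.1

lemma S_eq_transpose (hE : ∀ i j, E i j → E j i) (hrec : ∀ i j, R i j = (R j i)ᵀ)
    (hconn : Connected E) (hS : ∀ i j q, IsPathFrom E i j q → S (σ i) (σ j) = pathTransform R q)
    (i : Fin n) : S (σ 0) (σ i) = (S (σ i) (σ 0))ᵀ := by
  obtain ⟨p, hp⟩ := hconn 0 i
  rw [hS 0 i p hp, hS i 0 _ (hp.reverse hE), pathTransform_reverse hrec, transpose_transpose]

variable (σ S) in
/-- `𝒮ᵀ(𝟏 ⊗ I)`: its block `i` is `S (σ 0) (σ i)ᵀ`, which is `S (σ i) (σ 0)` by `S_eq_transpose`. -/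
def consensusFrame : Matrix (Fin n × Fin nd) (Fin nd) ℝ :=
  of fun p c => S (σ p.1) (σ 0) p.2 c

lemma curry_consensusFrame_mulVec (x : Fin nd → ℝ) (i : Fin n) :
    Function.curry (consensusFrame σ S *ᵥ x) i = S (σ i) (σ 0) *ᵥ x := rfl

lemma consensusFrame_transpose_mul_self (horth : ∀ i j, E i j → R i j * (R i j)ᵀ = 1)
    (hconn : Connected E) (hS : ∀ i j q, IsPathFrom E i j q → S (σ i) (σ j) = pathTransform R q) :
    (consensusFrame σ S)ᵀ * consensusFrame σ S = (n : ℝ) • 1 := by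
  have hblock : ∀ i, (S (σ i) (σ 0))ᵀ * S (σ i) (σ 0) = 1 := fun i =>
    mul_eq_one_comm.mp (S_mul_transpose_self horth hconn hS i)
  ext c d
  calc ((consensusFrame σ S)ᵀ * consensusFrame σ S) c d
      = ∑ i : Fin n, ((S (σ i) (σ 0))ᵀ * S (σ i) (σ 0)) c d := by
        simp only [mul_apply, Fintype.sum_prod_type, transpose_apply, consensusFrame, of_apply]
    _ = ((n : ℝ) • (1 : Matrix (Fin nd) (Fin nd) ℝ)) c d := by
        simp [hblock]

variable (σ S) in
noncomputable def consensusProj : Matrix (Fin n × Fin nd) (Fin n × Fin nd) ℝ :=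
  (n : ℝ)⁻¹ • (consensusFrame σ S * (consensusFrame σ S)ᵀ)

lemma consensusProj_transpose : (consensusProj σ S)ᵀ = consensusProj σ S := by
  rw [consensusProj, transpose_smul, transpose_mul, transpose_transpose]

lemma consensusProj_mulVec_apply (hE : ∀ i j, E i j → E j i) (hrec : ∀ i j, R i j = (R j i)ᵀ)
    (hconn : Connected E) (hS : ∀ i j q, IsPathFrom E i j q → S (σ i) (σ j) = pathTransform R q)
    (y : Fin n × Fin nd → ℝ) (q : Fin n × Fin nd) :
    (consensusProj σ S *ᵥ y) q
      = (∑ a, S (σ q.1) (σ 0) q.2 a * ∑ i, ∑ b, S (σ 0) (σ i) a b * y (i, b)) / n := by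
  rw [consensusProj, smul_mulVec, ← mulVec_mulVec, Pi.smul_apply, smul_eq_mul, div_eq_inv_mul]
  simp only [mulVec, dotProduct, Fintype.sum_prod_type, transpose_apply, consensusFrame, of_apply,
    S_eq_transpose hE hrec hconn hS]

variable {w : Fin n → Fin n → ℝ}

lemma supraLap_mul_consensusFrame (hconn : Connected (fun i j => w i j ≠ 0))
    (hS : ∀ i j q, IsPathFrom (fun i j => w i j ≠ 0) i j q →
      S (σ i) (σ j) = pathTransform R q) :
    supraLap w R * consensusFrame σ S = 0 := by
  refine ext_iff_mulVec.mpr fun x => ?_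
  rw [← mulVec_mulVec, zero_mulVec]
  ext ⟨i, a⟩
  change Function.curry (supraLap w R *ᵥ (consensusFrame σ S *ᵥ x)) i a = 0
  rw [curry_supraLap_mulVec]
  refine congrFun (Finset.sum_eq_zero fun j _ => ?_) a
  by_cases hij : w i j = 0
  · rw [hij, zero_smul]
  · rw [curry_consensusFrame_mulVec, curry_consensusFrame_mulVec, S_eq_mul_S_of_edge hconn hS hij,
      ← mulVec_mulVec, sub_self, smul_zero]

lemma eq_consensusFrame_mulVec_of_supraLap_mulVec_eq_zero (hw : ∀ i j, w i j = w j i)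
    (hw_nonneg : ∀ i j, 0 ≤ w i j) (horth : ∀ i j, w i j ≠ 0 → R i j * (R i j)ᵀ = 1)
    (hconn : Connected (fun i j => w i j ≠ 0))
    (hS : ∀ i j q, IsPathFrom (fun i j => w i j ≠ 0) i j q →
      S (σ i) (σ j) = pathTransform R q)
    {v : Fin n × Fin nd → ℝ} (hv : supraLap w R *ᵥ v = 0) :
    v = consensusFrame σ S *ᵥ Function.curry v 0 := by
  ext ⟨i, a⟩
  obtain ⟨p, hp⟩ := hconn i 0
  have hedge : ∀ i j, w i j ≠ 0 → Function.curry v i = R i j *ᵥ Function.curry v j :=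
    fun i j => curry_eq_mulVec_of_supraLap_mulVec_eq_zero hw hw_nonneg horth hv
  change Function.curry v i a = Function.curry (consensusFrame σ S *ᵥ Function.curry v 0) i a
  rw [curry_consensusFrame_mulVec, hS i 0 p hp, ← hp.eq_pathTransform_mulVec hedge]

lemma supraLap_mul_consensusProj (hconn : Connected (fun i j => w i j ≠ 0))
    (hS : ∀ i j q, IsPathFrom (fun i j => w i j ≠ 0) i j q →
      S (σ i) (σ j) = pathTransform R q) :
    supraLap w R * consensusProj σ S = 0 := by
  rw [consensusProj, mul_smul_comm, ← Matrix.mul_assoc, supraLap_mul_consensusFrame hconn hS,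
    Matrix.zero_mul, smul_zero]

lemma consensusProj_mulVec_of_supraLap_mulVec_eq_zero (hw : ∀ i j, w i j = w j i)
    (hw_nonneg : ∀ i j, 0 ≤ w i j) (horth : ∀ i j, w i j ≠ 0 → R i j * (R i j)ᵀ = 1)
    (hconn : Connected (fun i j => w i j ≠ 0))
    (hS : ∀ i j q, IsPathFrom (fun i j => w i j ≠ 0) i j q →
      S (σ i) (σ j) = pathTransform R q)
    {v : Fin n × Fin nd → ℝ} (hv : supraLap w R *ᵥ v = 0) :
    consensusProj σ S *ᵥ v = v := by
  have hn : (n : ℝ) ≠ 0 := Nat.cast_ne_zero.mpr (NeZero.ne n)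
  rw [eq_consensusFrame_mulVec_of_supraLap_mulVec_eq_zero hw hw_nonneg horth hconn hS hv,
    consensusProj, mulVec_mulVec, Matrix.smul_mul, Matrix.mul_assoc,
    consensusFrame_transpose_mul_self horth hconn hS, Matrix.mul_smul, Matrix.mul_one, smul_smul,
    inv_mul_cancel₀ hn, one_smul]

end Consensus

theorem stmt12_general [NeZero n] (w : Fin n → Fin n → ℝ)
    (R : Fin n → Fin n → Matrix (Fin nd) (Fin nd) ℝ)
    (σ : Fin n → Fin m) (S : Fin m → Fin m → Matrix (Fin nd) (Fin nd) ℝ)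
    (hw_symm : ∀ i j, w i j = w j i) (hw_nonneg : ∀ i j, 0 ≤ w i j)
    (hrec : ∀ i j, R i j = (R j i)ᵀ)
    (hcoh : Coherent (fun i j => w i j ≠ 0) R)
    (hconn : Connected (fun i j => w i j ≠ 0))
    (hS : ∀ i j q, IsPathFrom (fun i j => w i j ≠ 0) i j q →
      S (σ i) (σ j) = pathTransform R q)
    (y0 : Fin n × Fin nd → ℝ) :
    Filter.Tendsto
      (fun t : ℝ => (NormedSpace.exp ((-t) • supraLap w R)).mulVec y0)
      Filter.atTop
      (nhds (fun q : Fin n × Fin nd =>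
        (∑ a, S (σ q.1) (σ 0) q.2 a *
          (∑ i, ∑ b, S (σ 0) (σ i) a b * y0 (i, b))) / n)) := by
  have hsymm : ∀ i j, w i j ≠ 0 → w j i ≠ 0 := fun i j h => hw_symm i j ▸ h
  have horth : ∀ i j, w i j ≠ 0 → R i j * (R i j)ᵀ = 1 := fun _ _ =>
    hcoh.mul_transpose_self hsymm hrec
  have hPSD := supraLap_posSemidef hw_symm hw_nonneg hrec horth
  have hproj : consensusProj σ S = hPSD.isHermitian.kernelProj :=
    hPSD.isHermitian.eq_kernelProj consensusProj_transpose (supraLap_mul_consensusProj hconn hS)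
      fun _ => consensusProj_mulVec_of_supraLap_mulVec_eq_zero hw_symm hw_nonneg horth hconn hS
  have hlimit : (fun q : Fin n × Fin nd =>
      (∑ a, S (σ q.1) (σ 0) q.2 a * (∑ i, ∑ b, S (σ 0) (σ i) a b * y0 (i, b))) / n)
      = consensusProj σ S *ᵥ y0 :=
    funext fun q => (consensusProj_mulVec_apply hsymm hrec hconn hS y0 q).symm
  rw [hlimit, hproj]
  exact ((continuous_id.matrix_mulVec continuous_const).tendsto _).comp
    hPSD.tendsto_exp_neg_smul

/-- on a connected coherent network, consensus dynamics
`ẏ = −ℒy` converges to the steady state `y_j* = S_{σ(j)1} ȳ(0)/n`, where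
`ȳ(0) = Σ_i S_{1σ(i)} y_i(0)`. -/
theorem stmt12 [NeZero n] (w : Fin n → Fin n → ℝ)
    (R : Fin n → Fin n → Matrix (Fin nd) (Fin nd) ℝ)
    (σ : Fin n → Fin m) (S : Fin m → Fin m → Matrix (Fin nd) (Fin nd) ℝ)
    (hw_symm : ∀ i j, w i j = w j i) (hw_nonneg : ∀ i j, 0 ≤ w i j)
    (hloop : ∀ i, w i i = 0)
    (hrec : ∀ i j, R i j = (R j i)ᵀ)
    (hcoh : Coherent (fun i j => w i j ≠ 0) R)
    (hconn : Connected (fun i j => w i j ≠ 0))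
    (hS : ∀ i j q, IsPathFrom (fun i j => w i j ≠ 0) i j q →
      S (σ i) (σ j) = pathTransform R q)
    (y0 : Fin n × Fin nd → ℝ) :
    Filter.Tendsto
      (fun t : ℝ => (NormedSpace.exp ((-t) • supraLap w R)).mulVec y0)
      Filter.atTop
      (nhds (fun q : Fin n × Fin nd =>
        (∑ a, S (σ q.1) (σ 0) q.2 a *
          (∑ i, ∑ b, S (σ 0) (σ i) a b * y0 (i, b))) / n)) :=
  stmt12_general w R σ S hw_symm hw_nonneg hrec hcoh hconn hS y0
end
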